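/- Let G and G' be LCA groups, φ an endomorphism of G and φ' an endomorphism of G'. For every compact neighborhood C of 0 in G and every compact neighborhood C' of 0 in G', one has H_A(φ × φ', C × C') ≤ H_A(φ, C) + H_A(φ', C') (computed with a product Haar measure on G × G'). In particular, h_A(φ × φ') ≤ h_A(φ) + h_A(φ'). Furthermore, if the sequence ((log μ(T_n(φ,C)))/n)_{n≥1} converges (μ a Haar measure on G), then H_A(φ × φ', C × C') = H_A(φ, C) + H_A(φ', C'). -/

import Mathlib

/-!
Since `φ × φ'` maps rectangles to rectangles and `(A × B) + (A' × B') = (A + A') × (B + B')`,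
the trajectory of `C × C'` is `T_n(φ, C) × T_n(φ', C')`, so its measure is the product of the two
measures and the `n`-th term of the sequence defining `H_A(φ × φ', C × C')` is the sum of the
`n`-th terms for `H_A(φ, C)` and `H_A(φ', C')`. Both sequences have nonnegative `limsup`, so the
`limsup` of the sum is at most the sum of the `limsup`s, with equality when one of the sequences
converges. For `h_A`, every compact neighbourhood `D` of `0` in `G × G'` lies in the rectangle of
its two projections, which are again compact neighbourhoods of `0`.
-/

open MeasureTheory Filter Pointwise

noncomputable section

/-- The `n`-th `φ`-trajectory of `C`: `C + φ C + ⋯ + φ^{n-1} C` (pointwise sum of sets). -/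
def traj {G : Type*} [AddCommGroup G] (φ : G → G) (C : Set G) (n : ℕ) : Set G :=
  ∑ i ∈ Finset.range n, φ^[i] '' C

/-- The algebraic entropy of `φ` with respect to `C`, computed with the measure `μ`. -/
def entH {G : Type*} [AddCommGroup G] [MeasurableSpace G]
    (μ : Measure G) (φ : G → G) (C : Set G) : EReal :=
  Filter.limsup (fun n : ℕ => ENNReal.log (μ (traj φ C n)) / (n : EReal)) Filter.atTop

/-- The algebraic entropy of `φ`: the supremum of `entH μ φ C` over all compact
neighbourhoods `C` of `0`. -/
def entha {G : Type*} [AddCommGroup G] [TopologicalSpace G] [MeasurableSpace G]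
    (μ : Measure G) (φ : G → G) : EReal :=
  ⨆ (C : Set G) (_ : IsCompact C ∧ C ∈ nhds (0 : G)), entH μ φ C

open Set

section Trajectory

variable {G G' : Type*} [AddCommGroup G] [AddCommGroup G']

lemma traj_zero (f : G → G) (C : Set G) : traj f C 0 = 0 := by
  simp [traj]

lemma traj_succ (f : G → G) (C : Set G) (n : ℕ) : traj f C (n + 1) = traj f C n + f^[n] '' C := by
  simp only [traj, Finset.sum_range_succ]

lemma traj_prodMap (f : G → G) (g : G' → G') (C : Set G) (C' : Set G') (n : ℕ) :
    traj (Prod.map f g) (C ×ˢ C') n = traj f C n ×ˢ traj g C' n := by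
  induction n with
  | zero => simp [traj_zero, Set.zero_prod_zero]
  | succ n ih =>
    rw [traj_succ, traj_succ, traj_succ, ih, Prod.map_iterate, prodMap_image_prod,
      prod_add_prod_comm]

lemma traj_mono (f : G → G) {C D : Set G} (h : C ⊆ D) (n : ℕ) : traj f C n ⊆ traj f D n := by
  induction n with
  | zero => rfl
  | succ n ih => simpa only [traj_succ] using add_subset_add ih (image_mono h)

lemma subset_traj {f : G → G} (hf : f 0 = 0) {C : Set G} (hC : (0 : G) ∈ C) {n : ℕ} (hn : n ≠ 0) :
    C ⊆ traj f C n := by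
  induction n with
  | zero => contradiction
  | succ n ih =>
    rcases eq_or_ne n 0 with rfl | hn
    · simp [traj]
    · rw [traj_succ]
      exact (ih hn).trans (subset_add_left _ ⟨0, hC, Function.iterate_fixed hf n⟩)

lemma IsCompact.traj [TopologicalSpace G] [ContinuousAdd G] {f : G → G} (hf : Continuous f)
    {C : Set G} (hC : IsCompact C) (n : ℕ) : IsCompact (traj f C n) := by
  induction n with
  | zero => simp [traj_zero]
  | succ n ih => simpa only [traj_succ] using ih.add (hC.image (hf.iterate n))

end Trajectory

section ProductMeasure

variable {G G' : Type*} [TopologicalSpace G] [MeasurableSpace G] [BorelSpace G]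
  [TopologicalSpace G'] [MeasurableSpace G'] [BorelSpace G']

/-- The product σ-algebra need not be Borel, but its sets are still saturated for
inseparability, as one sees on their sections. -/
lemma Inseparable.mem_measurableSet_prod_iff {p q : G × G'} (h : Inseparable p q)
    {s : Set (G × G')} (hs : MeasurableSet s) : p ∈ s ↔ q ∈ s := by
  obtain ⟨⟨x, y⟩, ⟨a, b⟩⟩ := (⟨p, q⟩ : (G × G') × (G × G'))
  obtain ⟨hxa, hyb⟩ := inseparable_prod.1 h
  exact (hxa.mem_measurableSet_iff (measurable_prodMk_right hs)).trans
    (hyb.mem_measurableSet_iff (measurable_prodMk_left hs))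

lemma IsCompact.measure_closure_prod [R1Space G] [R1Space G'] {K : Set (G × G')}
    (hK : IsCompact K) (π : Measure (G × G')) : π (closure K) = π K := by
  refine le_antisymm ?_ (measure_mono subset_closure)
  have hsub : closure K ⊆ toMeasurable π K := by
    rw [hK.closure_eq_biUnion_inseparable, iUnion₂_subset_iff]
    exact fun x hx y hy ↦
      (hy.mem_measurableSet_prod_iff (measurableSet_toMeasurable π K)).1 (subset_toMeasurable π K hx)
  exact (measure_mono hsub).trans (measure_toMeasurable K).le

lemma measure_prod_eq_mul_of_isCompact [R1Space G] [R1Space G']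
    {μ : Measure G} {μ' : Measure G'} {π : Measure (G × G')}
    (hπ : ∀ (E : Set G) (E' : Set G'), MeasurableSet E → MeasurableSet E' →
      π (E ×ˢ E') = μ E * μ' E')
    {A : Set G} {B : Set G'} (hA : IsCompact A) (hB : IsCompact B) :
    π (A ×ˢ B) = μ A * μ' B := by
  rw [← (hA.prod hB).measure_closure_prod, closure_prod_eq,
    hπ _ _ measurableSet_closure measurableSet_closure, hA.measure_closure, hB.measure_closure]

end ProductMeasure

def entHSeq {G : Type*} [AddCommGroup G] [MeasurableSpace G] (μ : Measure G) (f : G → G)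
    (C : Set G) (n : ℕ) : EReal :=
  ENNReal.log (μ (traj f C n)) / (n : EReal)

section Entropy

variable {G G' : Type*} [AddCommGroup G] [MeasurableSpace G] [AddCommGroup G'] [MeasurableSpace G']

lemma entH_eq_limsup (μ : Measure G) (f : G → G) (C : Set G) :
    entH μ f C = limsup (entHSeq μ f C) atTop :=
  rfl

lemma entH_mono (μ : Measure G) (f : G → G) {C D : Set G} (h : C ⊆ D) :
    entH μ f C ≤ entH μ f D :=
  limsup_le_limsup <| .of_forall fun n ↦ EReal.div_le_div_right_of_nonneg (Nat.cast_nonneg' n)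
    (ENNReal.log_monotone (measure_mono (traj_mono f h n)))

/-- Below `log μ(T_n)/n` lies `log μ(C)/n`, which tends to `0` because `log μ(C)` is finite. -/
lemma entH_nonneg (μ : Measure G) {f : G → G} (hf : f 0 = 0) {C : Set G} (hC : (0 : G) ∈ C)
    (hμC : μ C ≠ 0) (hμC' : μ C ≠ ⊤) : 0 ≤ entH μ f C := by
  set r : ℝ := (ENNReal.log (μ C)).toReal
  have hr : (r : EReal) = ENNReal.log (μ C) :=
    EReal.coe_toReal (by simpa using hμC') (by simpa using hμC)
  have hlim : Tendsto (fun n : ℕ ↦ (r : EReal) / n) atTop (nhds 0) := by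
    simpa only [EReal.coe_div, EReal.coe_zero, EReal.coe_coe_eq_natCast] using
      EReal.tendsto_coe.2 (tendsto_const_div_atTop_nhds_zero_nat r)
  rw [entH_eq_limsup, ← hlim.limsup_eq]
  refine limsup_le_limsup ?_
  filter_upwards [eventually_ne_atTop 0] with n hn
  rw [hr]
  exact EReal.div_le_div_right_of_nonneg (Nat.cast_nonneg' n)
    (ENNReal.log_monotone (measure_mono (subset_traj hf hC hn)))

variable [TopologicalSpace G] [IsTopologicalAddGroup G] [BorelSpace G]
  [TopologicalSpace G'] [IsTopologicalAddGroup G'] [BorelSpace G']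

lemma entHSeq_prodMap {μ : Measure G} {μ' : Measure G'} {π : Measure (G × G')}
    (hπ : ∀ (E : Set G) (E' : Set G'), MeasurableSet E → MeasurableSet E' →
      π (E ×ˢ E') = μ E * μ' E')
    {f : G → G} (hf : Continuous f) {g : G' → G'} (hg : Continuous g)
    {C : Set G} {C' : Set G'} (hC : IsCompact C) (hC' : IsCompact C') :
    entHSeq π (Prod.map f g) (C ×ˢ C') = entHSeq μ f C + entHSeq μ' g C' := by
  ext n
  rw [entHSeq, traj_prodMap, measure_prod_eq_mul_of_isCompact hπ (hC.traj hf n) (hC'.traj hg n),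
    ENNReal.log_mul_add, EReal.add_div_of_nonneg_right (Nat.cast_nonneg' n)]
  rfl

variable {μ : Measure G} [μ.IsOpenPosMeasure] [IsFiniteMeasureOnCompacts μ]
  {μ' : Measure G'} [μ'.IsOpenPosMeasure] [IsFiniteMeasureOnCompacts μ'] {π : Measure (G × G')}
  {φ : G →+ G} {φ' : G' →+ G'}

lemma entH_prodMap_le_add
    (hπ : ∀ (E : Set G) (E' : Set G'), MeasurableSet E → MeasurableSet E' →
      π (E ×ˢ E') = μ E * μ' E')
    (hφ : Continuous φ) (hφ' : Continuous φ') {C : Set G} {C' : Set G'}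
    (hCc : IsCompact C) (hCn : C ∈ nhds 0) (hC'c : IsCompact C') (hC'n : C' ∈ nhds 0) :
    entH π (Prod.map φ φ') (C ×ˢ C') ≤ entH μ φ C + entH μ' φ' C' := by
  have hC := entH_nonneg μ (map_zero φ) (mem_of_mem_nhds hCn)
    (μ.measure_pos_of_mem_nhds hCn).ne' hCc.measure_ne_top
  have hC' := entH_nonneg μ' (map_zero φ') (mem_of_mem_nhds hC'n)
    (μ'.measure_pos_of_mem_nhds hC'n).ne' hC'c.measure_ne_top
  rw [entH_eq_limsup, entHSeq_prodMap hπ hφ hφ' hCc hC'c]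
  exact EReal.limsup_add_le (.inl (hC.trans_lt' EReal.bot_lt_zero).ne')
    (.inr (hC'.trans_lt' EReal.bot_lt_zero).ne')

lemma entH_prodMap_eq_add_of_tendsto
    (hπ : ∀ (E : Set G) (E' : Set G'), MeasurableSet E → MeasurableSet E' →
      π (E ×ˢ E') = μ E * μ' E')
    (hφ : Continuous φ) (hφ' : Continuous φ') {C : Set G} {C' : Set G'}
    (hCc : IsCompact C) (hCn : C ∈ nhds 0) (hC'c : IsCompact C') (hC'n : C' ∈ nhds 0)
    {l : EReal} (hl : Tendsto (entHSeq μ φ C) atTop (nhds l)) :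
    entH π (Prod.map φ φ') (C ×ˢ C') = entH μ φ C + entH μ' φ' C' := by
  refine (entH_prodMap_le_add hπ hφ hφ' hCc hCn hC'c hC'n).antisymm ?_
  calc entH μ φ C + entH μ' φ' C'
      = limsup (entHSeq μ' φ' C') atTop + liminf (entHSeq μ φ C) atTop := by
        rw [add_comm, entH_eq_limsup, entH_eq_limsup, hl.limsup_eq, hl.liminf_eq]
    _ ≤ limsup (entHSeq μ' φ' C' + entHSeq μ φ C) atTop := EReal.le_limsup_add
    _ = entH π (Prod.map φ φ') (C ×ˢ C') := by
        rw [entH_eq_limsup, entHSeq_prodMap hπ hφ hφ' hCc hC'c, add_comm]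

lemma entha_prodMap_le_add
    (hπ : ∀ (E : Set G) (E' : Set G'), MeasurableSet E → MeasurableSet E' →
      π (E ×ˢ E') = μ E * μ' E')
    (hφ : Continuous φ) (hφ' : Continuous φ') :
    entha π (Prod.map φ φ') ≤ entha μ φ + entha μ' φ' := by
  refine iSup₂_le fun D ⟨hDc, hDn⟩ ↦ ?_
  have hfst : IsCompact (Prod.fst '' D) ∧ Prod.fst '' D ∈ nhds 0 :=
    ⟨hDc.image continuous_fst, by simpa using isOpenMap_fst.image_mem_nhds hDn⟩
  have hsnd : IsCompact (Prod.snd '' D) ∧ Prod.snd '' D ∈ nhds 0 :=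
    ⟨hDc.image continuous_snd, by simpa using isOpenMap_snd.image_mem_nhds hDn⟩
  calc entH π (Prod.map φ φ') D
      ≤ entH π (Prod.map φ φ') ((Prod.fst '' D) ×ˢ (Prod.snd '' D)) :=
        entH_mono π _ fun p hp ↦ ⟨mem_image_of_mem _ hp, mem_image_of_mem _ hp⟩
    _ ≤ entH μ φ (Prod.fst '' D) + entH μ' φ' (Prod.snd '' D) :=
        entH_prodMap_le_add hπ hφ hφ' hfst.1 hfst.2 hsnd.1 hsnd.2
    _ ≤ entha μ φ + entha μ' φ' :=
        add_le_add (le_iSup₂ (f := fun C _ ↦ entH μ φ C) _ hfst)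
          (le_iSup₂ (f := fun C _ ↦ entH μ' φ' C) _ hsnd)

end Entropy

theorem entH_prod_le_add_general
    {G G' : Type*} [AddCommGroup G] [TopologicalSpace G] [IsTopologicalAddGroup G]
    [MeasurableSpace G] [BorelSpace G]
    [AddCommGroup G'] [TopologicalSpace G'] [IsTopologicalAddGroup G']
    [MeasurableSpace G'] [BorelSpace G']
    (μ : Measure G) [μ.IsAddHaarMeasure]
    (μ' : Measure G') [μ'.IsAddHaarMeasure]
    (π : Measure (G × G'))
    (hπ : ∀ (E : Set G) (E' : Set G'), MeasurableSet E → MeasurableSet E' →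
      π (E ×ˢ E') = μ E * μ' E')
    (φ : G →+ G) (hφ : Continuous φ) (φ' : G' →+ G') (hφ' : Continuous φ') :
    (∀ (C : Set G) (C' : Set G'), IsCompact C → C ∈ nhds (0 : G) →
        IsCompact C' → C' ∈ nhds (0 : G') →
      entH π (Prod.map ⇑φ ⇑φ') (C ×ˢ C') ≤ entH μ (⇑φ) C + entH μ' (⇑φ') C') ∧
    entha π (Prod.map ⇑φ ⇑φ') ≤ entha μ (⇑φ) + entha μ' (⇑φ') ∧
    (∀ (C : Set G) (C' : Set G'), IsCompact C → C ∈ nhds (0 : G) →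
        IsCompact C' → C' ∈ nhds (0 : G') →
      (∃ l : EReal, Filter.Tendsto
          (fun n : ℕ => ENNReal.log (μ (traj (⇑φ) C n)) / (n : EReal)) Filter.atTop (nhds l)) →
      entH π (Prod.map ⇑φ ⇑φ') (C ×ˢ C') = entH μ (⇑φ) C + entH μ' (⇑φ') C') :=
  ⟨fun _ _ hCc hCn hC'c hC'n ↦ entH_prodMap_le_add hπ hφ hφ' hCc hCn hC'c hC'n,
    entha_prodMap_le_add hπ hφ hφ',
    fun _ _ hCc hCn hC'c hC'n ⟨_, hl⟩ ↦
      entH_prodMap_eq_add_of_tendsto hπ hφ hφ' hCc hCn hC'c hC'n hl⟩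

/-- **Subadditivity of the algebraic entropy on products.**
Let `G, G'` be LCA groups with Haar measures `μ, μ'`, and let `π` be a product Haar
measure on `G × G'`.  For continuous endomorphisms `φ` of `G` and `φ'` of `G'` and all
compact neighbourhoods `C ∋ 0` in `G`, `C' ∋ 0` in `G'` one has
`H_A(φ × φ', C × C') ≤ H_A(φ, C) + H_A(φ', C')`, hence `h_A(φ × φ') ≤ h_A(φ) + h_A(φ')`;
moreover equality holds in the first inequality whenever `(log μ(T_n(φ,C)))/n` converges. -/
theorem entH_prod_le_add
    {G G' : Type*} [AddCommGroup G] [TopologicalSpace G] [IsTopologicalAddGroup G]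
    [LocallyCompactSpace G] [MeasurableSpace G] [BorelSpace G]
    [AddCommGroup G'] [TopologicalSpace G'] [IsTopologicalAddGroup G']
    [LocallyCompactSpace G'] [MeasurableSpace G'] [BorelSpace G']
    (μ : Measure G) [μ.IsAddHaarMeasure] [μ.Regular]
    (μ' : Measure G') [μ'.IsAddHaarMeasure] [μ'.Regular]
    (π : Measure (G × G')) [π.IsAddHaarMeasure]
    (hπ : ∀ (E : Set G) (E' : Set G'), MeasurableSet E → MeasurableSet E' →
      π (E ×ˢ E') = μ E * μ' E')
    (φ : G →+ G) (hφ : Continuous φ) (φ' : G' →+ G') (hφ' : Continuous φ') :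
    (∀ (C : Set G) (C' : Set G'), IsCompact C → C ∈ nhds (0 : G) →
        IsCompact C' → C' ∈ nhds (0 : G') →
      entH π (Prod.map ⇑φ ⇑φ') (C ×ˢ C') ≤ entH μ (⇑φ) C + entH μ' (⇑φ') C') ∧
    entha π (Prod.map ⇑φ ⇑φ') ≤ entha μ (⇑φ) + entha μ' (⇑φ') ∧
    (∀ (C : Set G) (C' : Set G'), IsCompact C → C ∈ nhds (0 : G) →
        IsCompact C' → C' ∈ nhds (0 : G') →
      (∃ l : EReal, Filter.Tendsto
          (fun n : ℕ => ENNReal.log (μ (traj (⇑φ) C n)) / (n : EReal)) Filter.atTop (nhds l)) →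
      entH π (Prod.map ⇑φ ⇑φ') (C ×ˢ C') = entH μ (⇑φ) C + entH μ' (⇑φ') C') :=
  entH_prod_le_add_general μ μ' π hπ φ hφ φ' hφ'
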